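/- arXiv:2107.11445 — 2 statements merged into one kernel-verified Lean document; each statement's English description precedes it below -/
import Mathlib

section
/- Let G be a directed acyclic graph on [m] with m ≥ 1 and let y ∈ ℝ^m have pairwise distinct entries. For each j, let v_j := min of y_i over all i that are ancestors of j or equal to j (i is an ancestor of j if there is a directed path of positive length from i to j). Sort the indices in order of decreasing v_j, breaking ties by increasing depth(j), to obtain a bijection π : [m] → [m] giving each index its rank. Then π is a topological order of G: for every edge (i,j) of G, π(i) < π(j). -/
/-- `WalkFromTo E i j l`: the list `i :: l` is a directed walk in `E`
from `i` to `j`, of length `l.length`. -/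
def WalkFromTo {m : ℕ} (E : Fin m → Fin m → Prop) (i j : Fin m)
    (l : List (Fin m)) : Prop :=
  List.Chain E i l ∧ (i :: l).getLast (by simp) = j

lemma chain_extend {α : Type*} {E : α → α → Prop} :
    ∀ (l : List α) (a b c : α), List.Chain E a l →
      (a :: l).getLast (by simp) = b → E b c → List.Chain E a (l ++ [c]) := by
  intro l
  induction l with
  | nil =>
    intro a b c _ hlast he
    simp at hlast
    subst hlast
    exact List.Chain.cons he List.Chain.nil
  | cons x t ih =>
    intro a b c hc hlast he
    rcases List.chain_cons.1 hc with ⟨hax, hxt⟩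
    have hlast' : (x :: t).getLast (by simp) = b := by
      rw [← hlast]; exact (List.getLast_cons (by simp)).symm
    exact List.chain_cons.2 ⟨hax, ih x b c hxt hlast' he⟩

/-- Stable topological sort: on a DAG `E` with `y` injective, let
`v j` be the minimum of `y i` over ancestors `i` of `j` together with `j`,
`d j` the longest-path depth of `j`, and let `π` rank indices by decreasing
`v` with ties broken by increasing depth. Then `π` is a topological order. -/
theorem stmt_8 (m : ℕ) (hm : 1 ≤ m) (E : Fin m → Fin m → Prop)
    (hacyc : ∀ v : Fin m, ¬ Relation.TransGen E v v)
    (y : Fin m → ℝ) (hy : Function.Injective y)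
    (v : Fin m → ℝ)
    (hv : ∀ j, IsLeast {r : ℝ | ∃ i : Fin m,
      (Relation.TransGen E i j ∨ i = j) ∧ r = y i} (v j))
    (d : Fin m → ℕ)
    (hd : ∀ j, IsGreatest {ℓ : ℕ | ∃ (i : Fin m) (l : List (Fin m)),
      WalkFromTo E i j l ∧ l.length = ℓ} (d j))
    (π : Equiv.Perm (Fin m))
    (hπ : ∀ i j, π i < π j ↔ (v j < v i ∨ (v i = v j ∧ d i < d j))) :
    ∀ i j, E i j → π i < π j := by
  intro i j hij
  rw [hπ]
  -- v j ≤ v i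
  obtain ⟨k, hk, hvk⟩ := (hv i).1
  have hkj : Relation.TransGen E k j := by
    rcases hk with hk | rfl
    · exact hk.tail hij
    · exact Relation.TransGen.single hij
  have hji : v j ≤ v i := (hv j).2 ⟨k, Or.inl hkj, hvk⟩
  rcases lt_or_eq_of_le hji with h | h
  · exact Or.inl h
  · refine Or.inr ⟨h.symm, ?_⟩
    obtain ⟨i₀, l, ⟨hch, hlast⟩, hlen⟩ := (hd i).1
    have hwalk : WalkFromTo E i₀ j (l ++ [j]) := by
      constructor
      · exact chain_extend l i₀ i j hch hlast hij
      · show ((i₀ :: l) ++ [j]).getLast (by simp) = j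
        simp
    have : d i + 1 ≤ d j := (hd j).2 ⟨i₀, l ++ [j], hwalk, by simp [hlen]⟩
    omega
end

section
/- Suppose Φ(x, ·) is, for a fixed x, a positive Boolean combination of ordering literals over ℝ^m, with DNF disjuncts q_1, …, q_k. Suppose an algorithm returns the first satisfiable disjunct under an ordering of disjuncts in which every disjunct whose graph has i* := argmax(y) as a root precedes every disjunct whose graph does not. Then: if there exists y' with pairwise distinct entries satisfying Φ(x, ·) with argmax y' = i*, the returned disjunct q also admits a satisfying vector y'' with pairwise distinct entries and argmax y'' = i*. -/
/-- A vector satisfies a conjunctive ordering constraint (a finite set of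
literals `(i,j)` meaning `y i < y j`). -/
def SatC {m : ℕ} (q : Finset (Fin m × Fin m)) (y : Fin m → ℝ) : Prop :=
  ∀ p ∈ q, y p.1 < y p.2

/-- The order graph of `q` (edge `i → j` iff `(j,i) ∈ q`) is acyclic. -/
def AcyclicC {m : ℕ} (q : Finset (Fin m × Fin m)) : Prop :=
  ∀ i : Fin m, ¬ Relation.TransGen (fun a b => (b, a) ∈ q) i i

/-- `i*` is a root of the order graph of `q` (no incoming edge). -/
def RootC {m : ℕ} (q : Finset (Fin m × Fin m)) (istar : Fin m) : Prop :=
  ∀ i : Fin m, (istar, i) ∉ q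

/-!
A vector with distinct entries, maximal at `i*`, satisfying some disjunct `q_t` shows that `q_t`
is acyclic and has `i*` as a root. The returned disjunct `q_r` is acyclic, and no acyclic disjunct
precedes it, so `r ≤ t`; the ordering of the disjuncts then forces `i*` to be a root of `q_r` too.
Finally, adding to the order graph of `q_r` an edge from every other vertex to its root `i*` keeps
it acyclic, and any injective strictly monotone labelling of that graph (ancestor counts, with ties
broken by the index) satisfies `q_r` with argmax `i*`.
-/

open Function Relation

section Acyclic

variable {α : Type*} {R : α → α → Prop}

theorem exists_nat_strictMono_of_acyclic [Fintype α] (hR : ∀ a, ¬ TransGen R a a) :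
    ∃ f : α → ℕ, ∀ a b, R a b → f a < f b := by
  classical
  refine ⟨fun a => (Finset.univ.filter (TransGen R · a)).card, fun a b hab => ?_⟩
  have hsub : Finset.univ.filter (TransGen R · a) ⊆ Finset.univ.filter (TransGen R · b) := by
    intro j hj
    simp only [Finset.mem_filter, Finset.mem_univ, true_and] at hj ⊢
    exact hj.tail hab
  refine Finset.card_lt_card ((Finset.ssubset_iff_of_subset hsub).2 ⟨a, ?_, ?_⟩)
  · simpa using TransGen.single hab
  · simpa using hR a

theorem exists_injective_nat_refining {n : ℕ} (f : α → ℕ) {e : α → Fin n}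
    (he : Injective e) :
    ∃ g : α → ℕ, Injective g ∧ ∀ a b, f a < f b → g a < g b := by
  refine ⟨fun a => f a * n + e a, fun a b hab => he (Fin.ext ?_), fun a b hab => ?_⟩
  · simpa only [Nat.mul_add_mod_of_lt (e a).is_lt, Nat.mul_add_mod_of_lt (e b).is_lt]
      using congrArg (· % n) hab
  · calc f a * n + e a < (f a + 1) * n := by
          rw [add_mul, one_mul]; exact Nat.add_lt_add_left (e a).is_lt _
      _ ≤ f b * n := Nat.mul_le_mul_right n hab
      _ ≤ f b * n + e b := Nat.le_add_right _ _

theorem exists_injective_real_strictMono_of_acyclic [Fintype α] (hR : ∀ a, ¬ TransGen R a a) :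
    ∃ y : α → ℝ, Injective y ∧ ∀ a b, R a b → y a < y b := by
  obtain ⟨f, hf⟩ := exists_nat_strictMono_of_acyclic hR
  obtain ⟨g, hg, hfg⟩ := exists_injective_nat_refining f (Fintype.equivFin α).injective
  exact ⟨fun a => g a, Nat.cast_injective.comp hg,
    fun a b hab => Nat.cast_lt.2 (hfg a b (hf a b hab))⟩

def AddEdgesTo (R : α → α → Prop) (s : α) (a b : α) : Prop :=
  R a b ∨ (b = s ∧ a ≠ s)

theorem transGen_of_transGen_addEdgesTo {s : α} (hs : ∀ x, ¬ R s x) {a b : α}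
    (hab : TransGen (AddEdgesTo R s) a b) (hb : b ≠ s) : TransGen R a b := by
  induction hab with
  | single h => exact .single (h.resolve_right fun h' => hb h'.1)
  | @tail c d _ hcd ih =>
    have hcd : R c d := hcd.resolve_right fun h' => hb h'.1
    exact (ih fun hc => hs d (hc ▸ hcd)).tail hcd

theorem not_transGen_addEdgesTo_self {s : α} (hR : ∀ a, ¬ TransGen R a a) (hs : ∀ x, ¬ R s x)
    (a : α) : ¬ TransGen (AddEdgesTo R s) a a := by
  intro h
  by_cases ha : a = s
  · subst ha
    obtain ⟨c, hac, -⟩ := TransGen.head'_iff.1 h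
    exact hac.elim (hs c) fun h' => h'.2 rfl
  · exact hR a (transGen_of_transGen_addEdgesTo hs h ha)

end Acyclic

section Constraints

variable {m : ℕ} {q : Finset (Fin m × Fin m)}

theorem acyclicC_iff : AcyclicC q ↔ ∀ i, ¬ TransGen (fun a b => (a, b) ∈ q) i i := by
  simp only [AcyclicC]
  exact forall_congr' fun i => not_congr (transGen_swap (r := fun a b => (a, b) ∈ q))

theorem SatC.acyclicC {y : Fin m → ℝ} (hy : SatC q y) : AcyclicC q := by
  have hlt : ∀ {a b}, TransGen (fun a b => (a, b) ∈ q) a b → y a < y b := by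
    intro a b hab
    induction hab with
    | single h => exact hy _ h
    | tail _ h ih => exact ih.trans (hy _ h)
  exact acyclicC_iff.2 fun i hi => lt_irrefl _ (hlt hi)

theorem SatC.rootC {y : Fin m → ℝ} (hy : SatC q y) {i : Fin m}
    (hmax : ∀ j, j ≠ i → y j < y i) : RootC q i := by
  intro j hij
  have hlt : y i < y j := hy _ hij
  rcases eq_or_ne j i with rfl | hj
  · exact lt_irrefl _ hlt
  · exact lt_asymm hlt (hmax j hj)

theorem AcyclicC.exists_satC_of_rootC (hq : AcyclicC q) {i : Fin m} (hi : RootC q i) :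
    ∃ y : Fin m → ℝ, Injective y ∧ SatC q y ∧ ∀ j, j ≠ i → y j < y i := by
  obtain ⟨y, hinj, hmono⟩ := exists_injective_real_strictMono_of_acyclic
    (not_transGen_addEdgesTo_self (acyclicC_iff.1 hq) hi)
  exact ⟨y, hinj, fun p hp => hmono p.1 p.2 (.inl hp),
    fun j hj => hmono j i (.inr ⟨rfl, hj⟩)⟩

end Constraints

theorem stmt_16_general (m k : ℕ) (qs : Fin k → Finset (Fin m × Fin m))
    (istar : Fin m)
    (horder : ∀ s t : Fin k, RootC (qs s) istar → ¬ RootC (qs t) istar → s < t)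
    (r : Fin k) (hr : AcyclicC (qs r))
    (hfirst : ∀ s : Fin k, s < r → ¬ AcyclicC (qs s))
    (hsat : ∃ y' : Fin m → ℝ, Function.Injective y' ∧
      (∃ t : Fin k, SatC (qs t) y') ∧ ∀ j, j ≠ istar → y' j < y' istar) :
    ∃ y'' : Fin m → ℝ, Function.Injective y'' ∧ SatC (qs r) y'' ∧
      ∀ j, j ≠ istar → y'' j < y'' istar := by
  obtain ⟨y, -, ⟨t, hyt⟩, hmax⟩ := hsat
  have hrt : r ≤ t := not_lt.1 fun htr => hfirst t htr hyt.acyclicC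
  have hroot : RootC (qs r) istar := by
    by_contra hnot
    exact not_lt.2 hrt (horder t r (hyt.rootC hmax) hnot)
  exact hr.exists_satC_of_rootC hroot

/-- If the disjuncts are ordered so that every disjunct whose order graph has
`i* = argmax y` as a root precedes every disjunct whose graph does not, and
the algorithm returns the first satisfiable disjunct `qs r`, then: whenever
some vector with distinct entries and argmax `i*` satisfies the DNF, the
returned disjunct also admits a satisfying vector with distinct entries and
argmax `i*`. -/
theorem stmt_16 (m k : ℕ) (qs : Fin k → Finset (Fin m × Fin m))
    (hq : ∀ t, ∀ p ∈ qs t, p.1 ≠ p.2)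
    (istar : Fin m)
    (horder : ∀ s t : Fin k, RootC (qs s) istar → ¬ RootC (qs t) istar → s < t)
    (r : Fin k) (hr : AcyclicC (qs r))
    (hfirst : ∀ s : Fin k, s < r → ¬ AcyclicC (qs s))
    (hsat : ∃ y' : Fin m → ℝ, Function.Injective y' ∧
      (∃ t : Fin k, SatC (qs t) y') ∧ ∀ j, j ≠ istar → y' j < y' istar) :
    ∃ y'' : Fin m → ℝ, Function.Injective y'' ∧ SatC (qs r) y'' ∧
      ∀ j, j ≠ istar → y'' j < y'' istar :=
  stmt_16_general m k qs istar horder r hr hfirst hsat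
end
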